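/- Suppose ‖Q_0‖ ≤ C_max/(1 − β) and the parameter sequence satisfies |θ_n| ≤ 1 for all n and |θ_n| is monotonically nonincreasing. Then the iterates of two-step Q-learning satisfy, for every n ≥ 1, ‖Q_n‖ ≤ (C_max/(1 − β))(1 + β|θ_0|) · ∏_{i=1}^{n−1} (1 + α_i β² |θ_i|). -/

import Mathlib

open Finset Real

variable {S A : Type*}

/-- Maximum norm `‖Q‖ = max_{(i,a)} |Q(i,a)|`. -/
noncomputable def maxNorm [Fintype S] [Fintype A] [Nonempty S] [Nonempty A]
    (Q : S × A → ℝ) : ℝ :=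
  Finset.univ.sup' Finset.univ_nonempty fun x => |Q x|

/-- One two-step Q-learning (TSQL) update: the selected pair `sa` is updated using
rewards `c'`, `c''`, next states `j`, `k`, step size `α` and parameter `θ`;
all other entries stay unchanged. -/
noncomputable def tsqlUpdate [Fintype A] [Nonempty A] [DecidableEq S] [DecidableEq A]
    (β : ℝ) (Q : S × A → ℝ) (sa : S × A) (j k : S) (c' c'' α θ : ℝ) : S × A → ℝ :=
  fun x => if x = sa then
      (1 - α) * Q sa + α * (c' + β * (Finset.univ.sup' Finset.univ_nonempty fun b => Q (j, b))
        + β * θ * (c'' + β * (Finset.univ.sup' Finset.univ_nonempty fun e => Q (k, e))))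
    else Q x

/-!
Each update replaces one entry by a convex combination of its old value and a target of
size at most `(C_max + β B)(1 + β|θₙ|)`, where `B` bounds `‖Qₙ‖`. With `M = C_max/(1 − β)`
the first target is at most `M (1 + β|θ₀|)`. Afterwards `B ≥ M (1 + β|θ₀|)`, so that
`C_max (1 + β|θₙ|) ≤ (1 − β) B` by monotonicity of `|θₙ|`, and this is exactly the condition
under which the convex combination stays below `B (1 + αₙ β² |θₙ|)`.
-/

theorem Finset.abs_sup'_le_sup'_abs {ι α : Type*} [LinearOrder α] [AddCommGroup α]
    [IsOrderedAddMonoid α] {s : Finset ι} (hs : s.Nonempty) (f : ι → α) :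
    |s.sup' hs f| ≤ s.sup' hs fun i => |f i| := by
  refine abs_le.2 ⟨?_, sup'_mono_fun fun i _ => le_abs_self (f i)⟩
  obtain ⟨i, hi, hmax⟩ := s.exists_mem_eq_sup' hs fun i => |f i|
  rw [hmax]
  exact (neg_abs_le (f i)).trans (le_sup' f hi)

section MaxNorm

variable [Fintype S] [Fintype A] [Nonempty S] [Nonempty A]

theorem abs_le_maxNorm (Q : S × A → ℝ) (x : S × A) : |Q x| ≤ maxNorm Q :=
  le_sup' (fun y => |Q y|) (mem_univ x)

theorem maxNorm_le_iff {Q : S × A → ℝ} {B : ℝ} : maxNorm Q ≤ B ↔ ∀ x, |Q x| ≤ B := by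
  simp [maxNorm, sup'_le_iff]

theorem abs_sup'_row_le_maxNorm (Q : S × A → ℝ) (s : S) :
    |univ.sup' univ_nonempty fun b => Q (s, b)| ≤ maxNorm Q :=
  (abs_sup'_le_sup'_abs _ _).trans (sup'_le _ _ fun b _ => abs_le_maxNorm Q (s, b))

theorem maxNorm_tsqlUpdate_le [DecidableEq S] [DecidableEq A] {β C B c' c'' α : ℝ}
    {Q : S × A → ℝ} (sa : S × A) (j k : S) (θ : ℝ) (hβ : 0 ≤ β)
    (hc' : |c'| ≤ C) (hc'' : |c''| ≤ C) (hα0 : 0 ≤ α) (hα1 : α ≤ 1) (hQ : maxNorm Q ≤ B) :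
    maxNorm (tsqlUpdate β Q sa j k c' c'' α θ) ≤
      max B ((1 - α) * B + α * ((C + β * B) * (1 + β * |θ|))) := by
  refine maxNorm_le_iff.2 fun x => ?_
  unfold tsqlUpdate
  split_ifs
  · refine le_max_of_le_right ?_
    set s₁ := univ.sup' univ_nonempty fun b => Q (j, b)
    set s₂ := univ.sup' univ_nonempty fun e => Q (k, e)
    have hq : |Q sa| ≤ B := (abs_le_maxNorm Q sa).trans hQ
    have hs₁ : |s₁| ≤ B := (abs_sup'_row_le_maxNorm Q j).trans hQ
    have hs₂ : |s₂| ≤ B := (abs_sup'_row_le_maxNorm Q k).trans hQ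
    have hinner : |c'' + β * s₂| ≤ C + β * B := by
      refine (abs_add_le _ _).trans ?_
      rw [abs_mul, abs_of_nonneg hβ]
      gcongr
    have htarget : |c' + β * s₁ + β * θ * (c'' + β * s₂)| ≤ (C + β * B) * (1 + β * |θ|) :=
      calc |c' + β * s₁ + β * θ * (c'' + β * s₂)|
          ≤ |c'| + β * |s₁| + β * |θ| * |c'' + β * s₂| := by
            refine (abs_add_le _ _).trans ?_
            rw [abs_mul, abs_mul, abs_of_nonneg hβ]
            gcongr
            exact (abs_add_le _ _).trans_eq (by rw [abs_mul, abs_of_nonneg hβ])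
        _ ≤ C + β * B + β * |θ| * (C + β * B) := by gcongr
        _ = (C + β * B) * (1 + β * |θ|) := by ring
    calc |(1 - α) * Q sa + α * (c' + β * s₁ + β * θ * (c'' + β * s₂))|
        ≤ (1 - α) * |Q sa| + α * |c' + β * s₁ + β * θ * (c'' + β * s₂)| := by
          refine (abs_add_le _ _).trans_eq ?_
          rw [abs_mul, abs_mul, abs_of_nonneg (sub_nonneg.2 hα1), abs_of_nonneg hα0]
      _ ≤ (1 - α) * B + α * ((C + β * B) * (1 + β * |θ|)) := by
          have := sub_nonneg.2 hα1
          gcongr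
  · exact le_max_of_le_left ((abs_le_maxNorm Q x).trans hQ)

end MaxNorm

theorem max_tsqlTarget_le_of_le {α β C B θ : ℝ} (hα : 0 ≤ α) (hB : 0 ≤ B)
    (hkey : C * (1 + β * |θ|) ≤ (1 - β) * B) :
    max B ((1 - α) * B + α * ((C + β * B) * (1 + β * |θ|))) ≤ B * (1 + α * β ^ 2 * |θ|) := by
  refine max_le (le_mul_of_one_le_right hB (le_add_of_nonneg_right (by positivity))) ?_
  have hgap : B * (1 + α * β ^ 2 * |θ|) - ((1 - α) * B + α * ((C + β * B) * (1 + β * |θ|))) =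
      α * ((1 - β) * B - C * (1 + β * |θ|)) := by ring
  linarith [mul_nonneg hα (sub_nonneg.2 hkey)]

theorem max_tsqlTarget_le_of_eq {α β C M θ : ℝ} (hα1 : α ≤ 1) (hβ : 0 ≤ β) (hM : 0 ≤ M)
    (hMC : (1 - β) * M = C) :
    max M ((1 - α) * M + α * ((C + β * M) * (1 + β * |θ|))) ≤ M * (1 + β * |θ|) := by
  have hM1 : M ≤ M * (1 + β * |θ|) :=
    le_mul_of_one_le_right hM (le_add_of_nonneg_right (by positivity))
  rw [show C + β * M = M by linarith]
  refine max_le hM1 ?_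
  linarith [mul_le_mul_of_nonneg_left hM1 (sub_nonneg.2 hα1)]

theorem tsql_iterates_bound_general [Fintype S] [Fintype A] [Nonempty S] [Nonempty A]
    [DecidableEq S] [DecidableEq A]
    (β Cmax : ℝ) (hβ0 : 0 ≤ β) (hβ1 : β < 1) (hC : 0 ≤ Cmax)
    (Q : ℕ → S × A → ℝ) (sa : ℕ → S × A) (j k : ℕ → S) (c' c'' α θ : ℕ → ℝ)
    (hc' : ∀ n, |c' n| ≤ Cmax) (hc'' : ∀ n, |c'' n| ≤ Cmax)
    (hα0 : ∀ n, 0 ≤ α n) (hα1 : ∀ n, α n ≤ 1)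
    (hθmono : Antitone fun n => |θ n|)
    (hupd : ∀ n, Q (n + 1) =
      tsqlUpdate β (Q n) (sa n) (j n) (k n) (c' n) (c'' n) (α n) (θ n))
    (hQ0 : maxNorm (Q 0) ≤ Cmax / (1 - β)) :
    ∀ n, 1 ≤ n → maxNorm (Q n) ≤
      (Cmax / (1 - β)) * (1 + β * |θ 0|) *
        ∏ i ∈ Finset.Icc 1 (n - 1), (1 + α i * β ^ 2 * |θ i|) := by
  set M := Cmax / (1 - β)
  have hM0 : 0 ≤ M := div_nonneg hC (by linarith)
  have hMC : (1 - β) * M = Cmax := mul_div_cancel₀ Cmax (by linarith)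
  suffices h : ∀ n, maxNorm (Q (n + 1)) ≤
      M * (1 + β * |θ 0|) * ∏ i ∈ Icc 1 n, (1 + α i * β ^ 2 * |θ i|) by
    intro n hn
    obtain ⟨n, rfl⟩ := Nat.exists_eq_add_of_le' hn
    simpa using h n
  intro n
  induction n with
  | zero =>
    rw [hupd, Icc_eq_empty_of_lt one_pos, prod_empty, mul_one]
    exact (maxNorm_tsqlUpdate_le _ _ _ _ hβ0 (hc' 0) (hc'' 0) (hα0 0) (hα1 0) hQ0).trans
      (max_tsqlTarget_le_of_eq (hα1 0) hβ0 hM0 hMC)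
  | succ n ih =>
    set P := ∏ i ∈ Icc 1 n, (1 + α i * β ^ 2 * |θ i|)
    have hP : 1 ≤ P := one_le_prod fun i _ => le_add_of_nonneg_right
      (mul_nonneg (mul_nonneg (hα0 i) (sq_nonneg β)) (abs_nonneg _))
    have hkey : Cmax * (1 + β * |θ (n + 1)|) ≤ (1 - β) * (M * (1 + β * |θ 0|) * P) :=
      calc Cmax * (1 + β * |θ (n + 1)|) ≤ Cmax * (1 + β * |θ 0|) := by
            gcongr Cmax * (1 + β * ?_); exact hθmono (Nat.zero_le _)
        _ ≤ Cmax * (1 + β * |θ 0|) * P := le_mul_of_one_le_right (by positivity) hP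
        _ = (1 - β) * (M * (1 + β * |θ 0|) * P) := by rw [← hMC]; ring
    rw [hupd, prod_Icc_succ_top (by omega), ← mul_assoc]
    exact (maxNorm_tsqlUpdate_le _ _ _ _ hβ0 (hc' _) (hc'' _) (hα0 _) (hα1 _) ih).trans
      (max_tsqlTarget_le_of_le (hα0 _) (by positivity) hkey)

/-- If `‖Q₀‖ ≤ C_max/(1−β)`, `|θₙ| ≤ 1` and `|θₙ|` is nonincreasing, then the TSQL
iterates satisfy, for every `n ≥ 1`,
`‖Qₙ‖ ≤ (C_max/(1−β))(1 + β|θ₀|) ∏_{i=1}^{n−1} (1 + αᵢ β² |θᵢ|)`. -/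
theorem tsql_iterates_bound [Fintype S] [Fintype A] [Nonempty S] [Nonempty A]
    [DecidableEq S] [DecidableEq A]
    (β Cmax : ℝ) (hβ0 : 0 ≤ β) (hβ1 : β < 1) (hC : 0 ≤ Cmax)
    (Q : ℕ → S × A → ℝ) (sa : ℕ → S × A) (j k : ℕ → S) (c' c'' α θ : ℕ → ℝ)
    (hc' : ∀ n, |c' n| ≤ Cmax) (hc'' : ∀ n, |c'' n| ≤ Cmax)
    (hα0 : ∀ n, 0 ≤ α n) (hα1 : ∀ n, α n ≤ 1)
    (hθ1 : ∀ n, |θ n| ≤ 1) (hθmono : Antitone fun n => |θ n|)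
    (hupd : ∀ n, Q (n + 1) =
      tsqlUpdate β (Q n) (sa n) (j n) (k n) (c' n) (c'' n) (α n) (θ n))
    (hQ0 : maxNorm (Q 0) ≤ Cmax / (1 - β)) :
    ∀ n, 1 ≤ n → maxNorm (Q n) ≤
      (Cmax / (1 - β)) * (1 + β * |θ 0|) *
        ∏ i ∈ Finset.Icc 1 (n - 1), (1 + α i * β ^ 2 * |θ i|) :=
  tsql_iterates_bound_general β Cmax hβ0 hβ1 hC Q sa j k c' c'' α θ hc' hc'' hα0 hα1 hθmono hupd hQ0
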